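/- Let f ∈ ℝ[x₁,…,xₙ] satisfy condition (C3). Then for α* ∈ A(f) the following are equivalent: (a) α* ∈ D(f); (b) α* ∈ Vᶜ(f), and every choice of coefficients λ_α ≥ 0, α ∈ V₀(f), with Σ_{α∈V₀(f)} λ_α·α = α* and Σ_{α∈V₀(f)} λ_α = 1 satisfies λ₀ = 0. -/

import Mathlib

open MvPolynomial Filter

noncomputable section

open scoped Classical

/-- The embedding of exponent vectors into `ℝⁿ`. -/
def expEmbed {n : ℕ} (α : Fin n →₀ ℕ) : Fin n → ℝ := fun i => (α i : ℝ)

/-- The Newton polytope at infinity `New∞(f) = conv(A(f) ∪ {0})`. -/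
def newtonInfty {n : ℕ} (f : MvPolynomial (Fin n) ℝ) : Set (Fin n → ℝ) :=
  convexHull ℝ (expEmbed '' ((insert 0 f.support : Finset (Fin n →₀ ℕ)) : Set (Fin n →₀ ℕ)))

/-- The vertex set `V₀(f)` of the Newton polytope at infinity, as a
finset of exponent vectors. -/
def V0 {n : ℕ} (f : MvPolynomial (Fin n) ℝ) : Finset (Fin n →₀ ℕ) :=
  (insert 0 f.support).filter fun α => expEmbed α ∈ Set.extremePoints ℝ (newtonInfty f)

/-- The set `V(f) = V₀(f) \ {0}` of vertices at infinity. -/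
def Vinf {n : ℕ} (f : MvPolynomial (Fin n) ℝ) : Finset (Fin n →₀ ℕ) := (V0 f).erase 0

/-- An exponent vector with all entries even, i.e. a member of `(2ℕ₀)ⁿ`. -/
def IsEvenExp {n : ℕ} (α : Fin n →₀ ℕ) : Prop := ∀ i, Even (α i)

/-- Condition (C1): `V(f) ⊆ (2ℕ₀)ⁿ`. -/
def CondC1 {n : ℕ} (f : MvPolynomial (Fin n) ℝ) : Prop := ∀ α ∈ Vinf f, IsEvenExp α

/-- Condition (C2): positive coefficients at all vertices at infinity. -/
def CondC2 {n : ℕ} (f : MvPolynomial (Fin n) ℝ) : Prop := ∀ α ∈ Vinf f, 0 < f.coeff α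

/-- Condition (C3): `V(f)` contains a vector `2 kᵢ eᵢ` for every `i`. -/
def CondC3 {n : ℕ} (f : MvPolynomial (Fin n) ℝ) : Prop :=
  ∀ i : Fin n, ∃ k : ℕ, 0 < k ∧ Finsupp.single i (2 * k) ∈ Vinf f

/-- An exponent vector of `f` is gem degenerate if it is no vertex at infinity but lies in
some nonempty face of `New∞(f)` not containing the origin. -/
def IsGemDegenerate {n : ℕ} (f : MvPolynomial (Fin n) ℝ) (α : Fin n →₀ ℕ) : Prop :=
  α ∈ f.support ∧ α ∉ Vinf f ∧
    ∃ G : Set (Fin n → ℝ), G.Nonempty ∧ IsExtreme ℝ (newtonInfty f) G ∧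
      (0 : Fin n → ℝ) ∉ G ∧ expEmbed α ∈ G

/-- The set `D(f)` of gem degenerate exponent vectors of `f`. -/
def Dfin {n : ℕ} (f : MvPolynomial (Fin n) ℝ) : Finset (Fin n →₀ ℕ) :=
  f.support.filter fun α => IsGemDegenerate f α

/-- `f` is gem regular if `D(f) = ∅`. -/
def GemRegular {n : ℕ} (f : MvPolynomial (Fin n) ℝ) : Prop := ∀ α, ¬ IsGemDegenerate f α

/-- `V₀ᶜ(f) = A(f) \ V₀(f)`. -/
def V0c {n : ℕ} (f : MvPolynomial (Fin n) ℝ) : Finset (Fin n →₀ ℕ) := f.support \ V0 f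

/-- A map of minimal barycentric coordinates of `f`. -/
def IsMinBary {n : ℕ} (f : MvPolynomial (Fin n) ℝ)
    (lam : (Fin n →₀ ℕ) → (Fin n →₀ ℕ) → ℝ) : Prop :=
  (∀ αs α, 0 ≤ lam αs α ∧ lam αs α ≤ 1) ∧
  ∀ αs ∈ V0c f, ∃ W : Finset (Fin n →₀ ℕ), W ⊆ V0 f ∧
    AffineIndependent ℝ (fun w : W => expEmbed (w : Fin n →₀ ℕ)) ∧
    (∀ α ∈ W, 0 < lam αs α) ∧
    (∀ α ∈ V0 f, α ∉ W → lam αs α = 0) ∧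
    (∑ α ∈ W, lam αs α) = 1 ∧
    (∑ α ∈ W, lam αs α • expEmbed α) = expEmbed αs

/-- `W_{α*}(λ_f)`, the minimal vertex representation of `α*` corresponding to `λ_f`. -/
def Wfin {n : ℕ} (f : MvPolynomial (Fin n) ℝ)
    (lam : (Fin n →₀ ℕ) → (Fin n →₀ ℕ) → ℝ) (αs : Fin n →₀ ℕ) : Finset (Fin n →₀ ℕ) :=
  (V0 f).filter fun α => 0 < lam αs α

/-- The circuit number `Θ(f, λ_f, α*)`. -/
def circuitNumber {n : ℕ} (f : MvPolynomial (Fin n) ℝ)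
    (lam : (Fin n →₀ ℕ) → (Fin n →₀ ℕ) → ℝ) (αs : Fin n →₀ ℕ) : ℝ :=
  ∏ α ∈ Wfin f lam αs, (f.coeff α / lam αs α) ^ (lam αs α)

/-- `g` is coercive on `ℝⁿ`: `g(x) → +∞` whenever `‖x‖ → +∞`. -/
def Coercive {n : ℕ} (g : (Fin n → ℝ) → ℝ) : Prop :=
  Tendsto g (comap (fun x : Fin n → ℝ => ‖x‖) atTop) atTop

/-! The points `y ∈ C` such that `x` lies in an open segment from `y` to a point of `C` form a
face of the convex set `C`, the smallest one containing `x`. Hence `x` lies in a face avoiding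
`p ∈ C` iff `x` is not of the form `t • p + (1 - t) • z` with `0 < t ≤ 1` and `z ∈ C`. For
`C = New∞(f) = conv V₀(f)` and `p = 0`, such decompositions of `x` correspond to the barycentric
representations of `x` by the vertices with `λ₀ > 0`. -/

section MinimalFace

variable {𝕜 E : Type*} [Field 𝕜] [LinearOrder 𝕜] [IsStrictOrderedRing 𝕜]
  [AddCommGroup E] [Module 𝕜 E]

theorem exists_mem_openSegment_of_mem_openSegment_of_mem_openSegment {x g y₁ y₂ z : E}
    (hg : g ∈ openSegment 𝕜 y₁ y₂) (hx : x ∈ openSegment 𝕜 g z) :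
    ∃ w ∈ openSegment 𝕜 y₂ z, x ∈ openSegment 𝕜 y₁ w := by
  obtain ⟨a, b, ha, hb, hab, rfl⟩ := hg
  obtain ⟨c, d, hc, hd, hcd, rfl⟩ := hx
  have hca : 0 < 1 - c * a := by nlinarith
  refine ⟨(1 - c * a)⁻¹ • ((c * b) • y₂ + d • z),
    ⟨(1 - c * a)⁻¹ * (c * b), (1 - c * a)⁻¹ * d, by positivity, by positivity, ?_, ?_⟩,
    c * a, 1 - c * a, by positivity, hca, by ring, ?_⟩
  · field_simp
    linear_combination c * hab + hcd
  · module
  · rw [smul_inv_smul₀ hca.ne']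
    module

theorem Convex.isExtreme_setOf_mem_openSegment {C : Set E} (hC : Convex 𝕜 C) (x : E) :
    IsExtreme 𝕜 C {y ∈ C | ∃ z ∈ C, x ∈ openSegment 𝕜 y z} := by
  refine ⟨fun y hy => hy.1, fun y₁ hy₁ y₂ hy₂ g ⟨_, z, hz, hx⟩ hg => ⟨hy₁, ?_⟩⟩
  obtain ⟨w, hw, hxw⟩ := exists_mem_openSegment_of_mem_openSegment_of_mem_openSegment hg hx
  exact ⟨w, hC.openSegment_subset hy₂ hz hw, hxw⟩

theorem Convex.exists_isExtreme_notMem_iff {C : Set E} (hC : Convex 𝕜 C) {x p : E}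
    (hx : x ∈ C) (hp : p ∈ C) :
    (∃ G, IsExtreme 𝕜 C G ∧ p ∉ G ∧ x ∈ G) ↔
      ∀ z ∈ C, ∀ t : 𝕜, 0 < t → t ≤ 1 → t • p + (1 - t) • z ≠ x := by
  constructor
  · rintro ⟨G, hG, hpG, hxG⟩ z hz t ht₀ ht₁ rfl
    rcases ht₁.eq_or_lt with rfl | ht₁
    · exact hpG (by simpa using hxG)
    · exact hpG (hG.2 hp hz hxG ⟨t, 1 - t, ht₀, sub_pos.2 ht₁, by ring, rfl⟩)
  · refine fun h => ⟨_, hC.isExtreme_setOf_mem_openSegment x, ?_, hx, x, hx, by simp⟩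
    rintro ⟨-, z, hz, a, b, ha, hb, hab, hpz⟩
    rw [eq_sub_of_add_eq' hab] at hpz
    exact h z hz a ha (by linarith) hpz

end MinimalFace

section Barycentric

variable {𝕜 E ι : Type*} [Field 𝕜] [LinearOrder 𝕜] [IsStrictOrderedRing 𝕜]
  [AddCommGroup E] [Module 𝕜 E] {s : Finset ι} {v : ι → E}

theorem Set.InjOn.exists_weights_of_mem_convexHull_image (hv : Set.InjOn v s) {z : E}
    (hz : z ∈ convexHull 𝕜 (v '' s)) :
    ∃ w : ι → 𝕜, (∀ i ∈ s, 0 ≤ w i) ∧ ∑ i ∈ s, w i = 1 ∧ ∑ i ∈ s, w i • v i = z := by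
  rw [← Finset.coe_image, Finset.mem_convexHull'] at hz
  obtain ⟨w, hw₀, hw₁, hwz⟩ := hz
  rw [Finset.sum_image hv] at hw₁ hwz
  exact ⟨w ∘ v, fun i hi => hw₀ _ (Finset.mem_image_of_mem v hi), hw₁, hwz⟩

theorem exists_smul_add_smul_eq_of_weight_pos {i₀ : ι} (hi₀ : i₀ ∈ s) {w : ι → 𝕜}
    (hw₀ : ∀ i ∈ s, 0 ≤ w i) (hw₁ : ∑ i ∈ s, w i = 1) (hwi₀ : 0 < w i₀) :
    ∃ z ∈ convexHull 𝕜 (v '' s), ∃ t : 𝕜, 0 < t ∧ t ≤ 1 ∧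
      t • v i₀ + (1 - t) • z = ∑ i ∈ s, w i • v i := by
  set r := s.erase i₀
  have hr₀ : ∀ i ∈ r, 0 ≤ w i := fun i hi => hw₀ i (Finset.mem_of_mem_erase hi)
  have hr₁ : ∑ i ∈ r, w i = 1 - w i₀ := by
    rw [← hw₁, ← Finset.add_sum_erase s w hi₀, add_sub_cancel_left]
  have hx : ∑ i ∈ s, w i • v i = w i₀ • v i₀ + ∑ i ∈ r, w i • v i :=
    (Finset.add_sum_erase s (fun i => w i • v i) hi₀).symm
  rcases (Finset.sum_nonneg hr₀).eq_or_lt with hr | hr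
  · refine ⟨v i₀, subset_convexHull 𝕜 _ ⟨i₀, hi₀, rfl⟩, 1, one_pos, le_rfl, ?_⟩
    have hw : ∀ i ∈ r, w i = 0 := (Finset.sum_eq_zero_iff_of_nonneg hr₀).1 hr.symm
    rw [hx, Finset.sum_eq_zero fun i hi => by rw [hw i hi, zero_smul]]
    rw [hr₁, eq_comm, sub_eq_zero] at hr
    simp [← hr]
  · refine ⟨r.centerMass w v, r.centerMass_mem_convexHull hr₀ hr fun i hi =>
      ⟨i, Finset.mem_of_mem_erase hi, rfl⟩, w i₀, hwi₀, by linarith, ?_⟩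
    rw [hx, Finset.centerMass, ← hr₁, smul_inv_smul₀ hr.ne']

theorem exists_weight_pos_of_smul_add_smul_eq (hv : Set.InjOn v s) {i₀ : ι} (hi₀ : i₀ ∈ s)
    {z : E} (hz : z ∈ convexHull 𝕜 (v '' s)) {t : 𝕜} (ht₀ : 0 < t) (ht₁ : t ≤ 1) :
    ∃ w : ι → 𝕜, (∀ i ∈ s, 0 ≤ w i) ∧ ∑ i ∈ s, w i = 1 ∧
      ∑ i ∈ s, w i • v i = t • v i₀ + (1 - t) • z ∧ 0 < w i₀ := by
  obtain ⟨u, hu₀, hu₁, huz⟩ := hv.exists_weights_of_mem_convexHull_image hz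
  have h1t : 0 ≤ 1 - t := sub_nonneg.2 ht₁
  refine ⟨fun i => (if i = i₀ then t else 0) + (1 - t) * u i, fun i hi => ?_, ?_, ?_, ?_⟩
  · have := hu₀ i hi
    dsimp only
    split_ifs <;> positivity
  · simp [Finset.sum_add_distrib, ← Finset.mul_sum, hi₀, hu₁]
  · simp [add_smul, Finset.sum_add_distrib, mul_smul, ← Finset.smul_sum, hi₀, huz]
  · have := hu₀ i₀ hi₀
    simp only [↓reduceIte]
    positivity

theorem forall_weight_eq_zero_iff (hv : Set.InjOn v s) {i₀ : ι} (hi₀ : i₀ ∈ s) {x : E} :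
    (∀ w : ι → 𝕜, (∀ i ∈ s, 0 ≤ w i) → ∑ i ∈ s, w i = 1 → ∑ i ∈ s, w i • v i = x →
        w i₀ = 0) ↔
      ∀ z ∈ convexHull 𝕜 (v '' s), ∀ t : 𝕜, 0 < t → t ≤ 1 → t • v i₀ + (1 - t) • z ≠ x := by
  constructor
  · rintro h z hz t ht₀ ht₁ rfl
    obtain ⟨w, hw₀, hw₁, hwx, hwi₀⟩ := exists_weight_pos_of_smul_add_smul_eq hv hi₀ hz ht₀ ht₁
    exact hwi₀.ne' (h w hw₀ hw₁ hwx)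
  · rintro h w hw₀ hw₁ rfl
    by_contra hwi₀
    obtain ⟨z, hz, t, ht₀, ht₁, hx⟩ := exists_smul_add_smul_eq_of_weight_pos (v := v) hi₀ hw₀ hw₁
      ((hw₀ i₀ hi₀).lt_of_ne' hwi₀)
    exact h z hz t ht₀ ht₁ hx

end Barycentric

theorem Set.Finite.convexHull_extremePoints_convexHull {E : Type*} [AddCommGroup E] [Module ℝ E]
    [TopologicalSpace E] [T2Space E] [IsTopologicalAddGroup E] [ContinuousSMul ℝ E]
    [LocallyConvexSpace ℝ E] {s : Set E} (hs : s.Finite) :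
    convexHull ℝ ((convexHull ℝ s).extremePoints ℝ) = convexHull ℝ s :=
  ((hs.subset extremePoints_convexHull_subset).isClosed_convexHull ℝ).closure_eq.symm.trans
    (closure_convexHull_extremePoints (hs.isCompact_convexHull ℝ) (convex_convexHull ℝ s))

theorem zero_mem_extremePoints_of_subset_Ici {𝕜 E : Type*} [Field 𝕜] [LinearOrder 𝕜]
    [IsStrictOrderedRing 𝕜] [AddCommGroup E] [PartialOrder E] [IsOrderedAddMonoid E]
    [Module 𝕜 E] [PosSMulMono 𝕜 E] {A : Set E} (h₀ : 0 ∈ A) (hA : A ⊆ Set.Ici 0) :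
    0 ∈ A.extremePoints 𝕜 := by
  refine ⟨h₀, fun x₁ hx₁ x₂ hx₂ ⟨a, b, ha, hb, _, hx⟩ => ?_⟩
  have h₁ : 0 ≤ a • x₁ := smul_nonneg ha.le (hA hx₁)
  have h₂ : 0 ≤ b • x₂ := smul_nonneg hb.le (hA hx₂)
  have : a • x₁ = 0 := le_antisymm (hx ▸ le_add_of_nonneg_right h₂) h₁
  exact (smul_eq_zero.1 this).resolve_left ha.ne'

section NewtonPolytope

variable {n : ℕ} (f : MvPolynomial (Fin n) ℝ)

theorem expEmbed_zero : expEmbed (0 : Fin n →₀ ℕ) = 0 := by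
  ext
  simp [expEmbed]

theorem expEmbed_injective : Function.Injective (expEmbed (n := n)) :=
  fun _ _ h => Finsupp.ext fun i => Nat.cast_injective (congrFun h i)

theorem convex_newtonInfty : Convex ℝ (newtonInfty f) :=
  convex_convexHull ℝ _

theorem expEmbed_mem_newtonInfty {α : Fin n →₀ ℕ} (hα : α ∈ insert 0 f.support) :
    expEmbed α ∈ newtonInfty f :=
  subset_convexHull ℝ _ ⟨α, hα, rfl⟩

theorem newtonInfty_subset_Ici : newtonInfty f ⊆ Set.Ici 0 :=
  convexHull_min (by rintro _ ⟨α, -, rfl⟩ i; exact Nat.cast_nonneg _) (convex_Ici 0)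

theorem zero_mem_V0 : 0 ∈ V0 f := by
  refine Finset.mem_filter.2 ⟨Finset.mem_insert_self _ _, ?_⟩
  rw [expEmbed_zero]
  exact zero_mem_extremePoints_of_subset_Ici
    (expEmbed_zero ▸ expEmbed_mem_newtonInfty f (Finset.mem_insert_self _ _))
    (newtonInfty_subset_Ici f)

theorem extremePoints_newtonInfty : (newtonInfty f).extremePoints ℝ = expEmbed '' V0 f := by
  ext x
  constructor
  · intro hx
    obtain ⟨α, hα, rfl⟩ := extremePoints_convexHull_subset hx
    exact ⟨α, Finset.mem_filter.2 ⟨hα, hx⟩, rfl⟩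
  · rintro ⟨α, hα, rfl⟩
    exact (Finset.mem_filter.1 hα).2

theorem convexHull_V0 : convexHull ℝ (expEmbed '' V0 f) = newtonInfty f := by
  rw [← extremePoints_newtonInfty]
  exact (Set.toFinite _).convexHull_extremePoints_convexHull

end NewtonPolytope

theorem stmt7_general {n : ℕ} (f : MvPolynomial (Fin n) ℝ)
    (αs : Fin n →₀ ℕ) (hαs : αs ∈ f.support) :
    IsGemDegenerate f αs ↔
      (αs ∉ Vinf f ∧
        ∀ lamb : (Fin n →₀ ℕ) → ℝ,
          (∀ α ∈ V0 f, 0 ≤ lamb α) →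
          (∑ α ∈ V0 f, lamb α) = 1 →
          (∑ α ∈ V0 f, lamb α • expEmbed α) = expEmbed αs →
          lamb 0 = 0) := by
  have hx := expEmbed_mem_newtonInfty f (Finset.mem_insert_of_mem hαs)
  have h₀ := expEmbed_mem_newtonInfty f (Finset.mem_insert_self 0 f.support)
  rw [forall_weight_eq_zero_iff expEmbed_injective.injOn (zero_mem_V0 f), convexHull_V0,
    ← (convex_newtonInfty f).exists_isExtreme_notMem_iff hx h₀]
  simp only [IsGemDegenerate, hαs, true_and, expEmbed_zero]
  exact and_congr_right fun _ => exists_congr fun G =>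
    ⟨fun h => h.2, fun h => ⟨⟨_, h.2.2⟩, h⟩⟩

/-- Proposition: characterization of the set `D(f)`. -/
theorem stmt7 {n : ℕ} (f : MvPolynomial (Fin n) ℝ) (hC3 : CondC3 f)
    (αs : Fin n →₀ ℕ) (hαs : αs ∈ f.support) :
    IsGemDegenerate f αs ↔
      (αs ∉ Vinf f ∧
        ∀ lamb : (Fin n →₀ ℕ) → ℝ,
          (∀ α ∈ V0 f, 0 ≤ lamb α) →
          (∑ α ∈ V0 f, lamb α) = 1 →
          (∑ α ∈ V0 f, lamb α • expEmbed α) = expEmbed αs →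
          lamb 0 = 0) :=
  stmt7_general f αs hαs

end
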